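/- arXiv:math/0203069 — 3 statements merged into one kernel-verified Lean document; each statement's English description precedes it below -/
import Mathlib

section
/- The bilinear bracket on the polynomial ring C[x11, x12, x21, x22] determined on generators by {x12,x11} = d·x11·x12, {x21,x11} = d·x11·x21, {x22,x11} = 2d·x12·x21, {x12,x21} = 0, {x22,x12} = d·x12·x22, {x22,x21} = d·x21·x22 (extended by the Leibniz rule in each argument and antisymmetry) satisfies the Jacobi identity, i.e. it makes C[x11,x12,x21,x22] into a Poisson algebra. -/
open MvPolynomial

/-- The generator `x_{ij}` of the polynomial ring `ℂ[x₁₁, x₁₂, x₂₁, x₂₂]`. -/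
noncomputable def x2 (i j : Fin 2) : MvPolynomial (Fin 2 × Fin 2) ℂ :=
  MvPolynomial.X (i, j)

set_option maxHeartbeats 1000000 in
/-- The bilinear bracket on `ℂ[x₁₁, x₁₂, x₂₁, x₂₂]` determined on generators by the
`SL₂^{(d)}` relations (extended by antisymmetry and the Leibniz rule) satisfies the
Jacobi identity, i.e. it makes the polynomial ring into a Poisson algebra. -/
theorem stmt0 (d : ℂ)
    (B : MvPolynomial (Fin 2 × Fin 2) ℂ →ₗ[ℂ] MvPolynomial (Fin 2 × Fin 2) ℂ →ₗ[ℂ]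
      MvPolynomial (Fin 2 × Fin 2) ℂ)
    (hskew : ∀ f g, B f g = - B g f)
    (hLeib : ∀ f g h, B (f * g) h = f * B g h + B f h * g)
    (hLeib' : ∀ f g h, B f (g * h) = g * B f h + B f g * h)
    (h1 : B (x2 0 1) (x2 0 0) = C d * (x2 0 0 * x2 0 1))
    (h2 : B (x2 1 0) (x2 0 0) = C d * (x2 0 0 * x2 1 0))
    (h3 : B (x2 1 1) (x2 0 0) = C (2 * d) * (x2 0 1 * x2 1 0))
    (h4 : B (x2 0 1) (x2 1 0) = 0)
    (h5 : B (x2 1 1) (x2 0 1) = C d * (x2 0 1 * x2 1 1))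
    (h6 : B (x2 1 1) (x2 1 0) = C d * (x2 1 0 * x2 1 1)) :
    ∀ f g h, B f (B g h) + B g (B h f) + B h (B f g) = 0 := by
  simp only [x2] at h1 h2 h3 h4 h5 h6
  -- bracket with 1 vanishes
  have hBone : ∀ f, B f 1 = 0 := by
    intro f
    have h := hLeib' f 1 1
    rw [mul_one, one_mul, mul_one] at h
    -- h : B f 1 = B f 1 + B f 1
    exact left_eq_add.mp h
  -- bracket with constants vanishes
  have hBC : ∀ f a, B f (C a) = 0 := by
    intro f a
    have hc : (C a : MvPolynomial (Fin 2 × Fin 2) ℂ) = a • 1 := by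
      rw [smul_eq_C_mul, mul_one]
    rw [hc, map_smul, hBone, smul_zero]
  have hCB : ∀ f a, B (C a) f = 0 := by
    intro f a
    rw [hskew, hBC, neg_zero]
  -- diagonal vanishes
  have hdiag : ∀ f, B f f = 0 := by
    intro f
    have h := hskew f f
    have h2 : (2 : ℂ) • B f f = 0 := by
      rw [two_smul]
      linear_combination h
    have := smul_eq_zero.mp h2
    simpa using this.resolve_left two_ne_zero
  -- skew versions of the structure constants
  have p1 : B (X ((0 : Fin 2), (0 : Fin 2))) (X (0, 1)) =
      -(C d * (X (0, 0) * X (0, 1))) := by rw [hskew, h1]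
  have p2 : B (X ((0 : Fin 2), (0 : Fin 2))) (X (1, 0)) =
      -(C d * (X (0, 0) * X (1, 0))) := by rw [hskew, h2]
  have p3 : B (X ((0 : Fin 2), (0 : Fin 2))) (X (1, 1)) =
      -(C (2 * d) * (X (0, 1) * X (1, 0))) := by rw [hskew, h3]
  have p4 : B (X ((1 : Fin 2), (0 : Fin 2))) (X (0, 1)) = 0 := by
    rw [hskew, h4, neg_zero]
  have p5 : B (X ((0 : Fin 2), (1 : Fin 2))) (X (1, 1)) =
      -(C d * (X (0, 1) * X (1, 1))) := by rw [hskew, h5]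
  have p6 : B (X ((1 : Fin 2), (0 : Fin 2))) (X (1, 1)) =
      -(C d * (X (1, 0) * X (1, 1))) := by rw [hskew, h6]
  have dOO : B (X ((0 : Fin 2), (0 : Fin 2))) (X (0, 0)) = 0 := hdiag _
  have dOI : B (X ((0 : Fin 2), (1 : Fin 2))) (X (0, 1)) = 0 := hdiag _
  have dIO : B (X ((1 : Fin 2), (0 : Fin 2))) (X (1, 0)) = 0 := hdiag _
  have dII : B (X ((1 : Fin 2), (1 : Fin 2))) (X (1, 1)) = 0 := hdiag _
  -- Jacobi identity on generators
  have key : ∀ p q r : Fin 2 × Fin 2,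
      B (X p) (B (X q) (X r)) + B (X q) (B (X r) (X p)) + B (X r) (B (X p) (X q)) = 0 := by
    intro p q r
    fin_cases p <;> fin_cases q <;> fin_cases r <;>
      simp only [Fin.mk_zero, Fin.mk_one] <;>
      simp only [h1, h2, h3, h4, h5, h6, p1, p2, p3, p4, p5, p6, dOO, dOI, dIO, dII,
        hLeib', hBC, map_zero, map_neg, map_add, mul_zero, zero_mul, add_zero, zero_add,
        neg_zero, mul_neg, neg_neg, neg_add_rev] <;>
      ring
  -- the Jacobiator is a derivation in its first argument
  have JL : ∀ f₁ f₂ g h,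
      B (f₁ * f₂) (B g h) + B g (B h (f₁ * f₂)) + B h (B (f₁ * f₂) g)
        = f₁ * (B f₂ (B g h) + B g (B h f₂) + B h (B f₂ g))
          + (B f₁ (B g h) + B g (B h f₁) + B h (B f₁ g)) * f₂ := by
    intro f₁ f₂ g h
    rw [hLeib f₁ f₂ (B g h), hLeib' h f₁ f₂, hLeib f₁ f₂ g, map_add, map_add,
      hLeib' g f₁ (B h f₂), hLeib' g (B h f₁) f₂, hLeib' h f₁ (B f₂ g),
      hLeib' h (B f₁ g) f₂]
    linear_combination (B h f₂) * hskew g f₁ + (B h f₁) * hskew g f₂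
  -- Jacobi with first two arguments generators
  have step3 : ∀ p q : Fin 2 × Fin 2, ∀ h,
      B (X p) (B (X q) h) + B (X q) (B h (X p)) + B h (B (X p) (X q)) = 0 := by
    intro p q h
    induction h using MvPolynomial.induction_on with
    | C a =>
      simp [hBC, hCB]
    | add f g hf hg =>
      simp only [map_add, LinearMap.add_apply]
      linear_combination hf + hg
    | mul_X s n hs =>
      linear_combination JL s (X n) (X p) (X q) + s * key n p q + hs * X n
  -- Jacobi with first argument a generator
  have step2 : ∀ p : Fin 2 × Fin 2, ∀ g h,
      B (X p) (B g h) + B g (B h (X p)) + B h (B (X p) g) = 0 := by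
    intro p g h
    induction g using MvPolynomial.induction_on with
    | C a =>
      simp [hBC, hCB]
    | add f₁ f₂ hf₁ hf₂ =>
      simp only [map_add, LinearMap.add_apply]
      linear_combination hf₁ + hf₂
    | mul_X s n hs =>
      linear_combination JL s (X n) h (X p) + s * step3 p n h + hs * X n
  -- general case
  intro f g h
  induction f using MvPolynomial.induction_on with
  | C a =>
    simp [hBC, hCB]
  | add f₁ f₂ hf₁ hf₂ =>
    simp only [map_add, LinearMap.add_apply]
    linear_combination hf₁ + hf₂
  | mul_X s n hs =>
    linear_combination JL s (X n) g h + s * step2 n g h + hs * X n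
end

section
/- Let c_{k k'} (for 1 ≤ k < k' ≤ m) be the skew-symmetric constants c_{k k'} = ε(i_k)(α_{|i_k|}, α_{|i_{k'}|}) when ε(i_k) = ε(i_{k'}), and c_{k k'} = 0 when ε(i_k) ≠ ε(i_{k'}); additionally pair y_k with characters a^γ by ⟨y_k, a^γ⟩ = (α_{|i_k|}, γ) and ⟨a^γ, a^{γ'}⟩ = 0. Then the bilinear extension of this pairing to monomials M_k = a^{−ω_{|i_k|}} ∏_{ℓ<k} y_ℓ^{c^k_ℓ} ∏_{ℓ≥k} y_ℓ^{d^k_ℓ}, with exponents defined by c^k_ℓ α_{|i_ℓ|} = γ^k_ℓ − γ^k_{ℓ+1} and d^k_ℓ α_{|i_ℓ|} = δ^k_ℓ − δ^k_{ℓ−1}, satisfies ⟨M_k, M_{k'}⟩ = (γ^k, γ^{k'}) − (δ^k, δ^{k'}) for k < k'. -/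
/-- The simple root `α_j = ∑ᵢ a_{ij} ω_i` in fundamental-weight coordinates. -/
def simpleRoot (r : ℕ) (A : Fin r → Fin r → ℤ) (j : Fin r) : Fin r → ℚ :=
  fun i => (A i j : ℚ)

/-- The simple reflection `s_i(γ) = γ - ⟨αᵢ^∨, γ⟩ αᵢ`. -/
def simpleRefl (r : ℕ) (A : Fin r → Fin r → ℤ) (i : Fin r) (γ : Fin r → ℚ) : Fin r → ℚ :=
  γ - γ i • simpleRoot r A i

/-- Apply a list of simple reflections to a vector, the head of the list acting first. -/
def chainRefl (r : ℕ) (A : Fin r → Fin r → ℤ) (L : List (Fin r)) (v : Fin r → ℚ) :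
    Fin r → ℚ :=
  L.foldl (fun acc i => simpleRefl r A i acc) v

/-- The fundamental weight `ω_j`. -/
def fund (r : ℕ) (j : Fin r) : Fin r → ℚ := Pi.single j 1

namespace Stmt17Aux
open Finset

variable {r : ℕ} {A : Fin r → Fin r → ℤ}

lemma chainRefl_cons (i : Fin r) (L : List (Fin r)) (v : Fin r → ℚ) :
    chainRefl r A (i :: L) v = chainRefl r A L (simpleRefl r A i v) := rfl

lemma chainRefl_append (L₁ L₂ : List (Fin r)) (v : Fin r → ℚ) :
    chainRefl r A (L₁ ++ L₂) v = chainRefl r A L₂ (chainRefl r A L₁ v) := by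
  simp [chainRefl, List.foldl_append]

lemma chainRefl_concat (L : List (Fin r)) (i : Fin r) (v : Fin r → ℚ) :
    chainRefl r A (L ++ [i]) v = simpleRefl r A i (chainRefl r A L v) := by
  rw [chainRefl_append]; rfl

lemma simpleRefl_invol (hdiag : ∀ i, A i i = 2) (i : Fin r) (v : Fin r → ℚ) :
    simpleRefl r A i (simpleRefl r A i v) = v := by
  have hα : simpleRoot r A i i = 2 := by simp [simpleRoot, hdiag i]
  funext j
  simp only [simpleRefl, Pi.sub_apply, Pi.smul_apply, smul_eq_mul, hα]
  ring

lemma chainRefl_reverse_cancel (hdiag : ∀ i, A i i = 2) (L : List (Fin r)) (v : Fin r → ℚ) :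
    chainRefl r A L.reverse (chainRefl r A L v) = v := by
  induction L generalizing v with
  | nil => rfl
  | cons i L ih =>
    rw [List.reverse_cons, chainRefl_cons, chainRefl_concat, ih, simpleRefl_invol hdiag]

lemma chainRefl_cancel_reverse (hdiag : ∀ i, A i i = 2) (L : List (Fin r)) (v : Fin r → ℚ) :
    chainRefl r A L (chainRefl r A L.reverse v) = v := by
  have := chainRefl_reverse_cancel hdiag L.reverse v
  rwa [List.reverse_reverse] at this

variable {dsym : Fin r → ℚ} {B : (Fin r → ℚ) →ₗ[ℚ] (Fin r → ℚ) →ₗ[ℚ] ℚ}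

lemma B_cross (hB_symm : ∀ x y, B x y = B y x)
    (hB_root : ∀ i γ, B (simpleRoot r A i) γ = dsym i * γ i)
    (i : Fin r) (x y : Fin r → ℚ) :
    B (simpleRefl r A i x) y = B x (simpleRefl r A i y) := by
  have h1 : B (simpleRoot r A i) y = dsym i * y i := hB_root i y
  have h2 : B x (simpleRoot r A i) = dsym i * x i := by rw [hB_symm]; exact hB_root i x
  simp only [simpleRefl, map_sub, map_smul, LinearMap.sub_apply, LinearMap.smul_apply,
    smul_eq_mul, h1, h2]
  ring

lemma B_inv (hdiag : ∀ i, A i i = 2) (hB_symm : ∀ x y, B x y = B y x)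
    (hB_root : ∀ i γ, B (simpleRoot r A i) γ = dsym i * γ i)
    (i : Fin r) (x y : Fin r → ℚ) :
    B (simpleRefl r A i x) (simpleRefl r A i y) = B x y := by
  rw [B_cross hB_symm hB_root, simpleRefl_invol hdiag]

lemma B_chain_inv (hdiag : ∀ i, A i i = 2) (hB_symm : ∀ x y, B x y = B y x)
    (hB_root : ∀ i γ, B (simpleRoot r A i) γ = dsym i * γ i)
    (L : List (Fin r)) (x y : Fin r → ℚ) :
    B (chainRefl r A L x) (chainRefl r A L y) = B x y := by
  induction L generalizing x y with
  | nil => rfl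
  | cons i L ih => rw [chainRefl_cons, chainRefl_cons, ih, B_inv hdiag hB_symm hB_root]

lemma tele_Ico_sub {M : Type*} [AddCommGroup M] (f : ℕ → M) {a b : ℕ} (h : a ≤ b) :
    ∑ i ∈ Ico a b, (f i - f (i + 1)) = f a - f b := by
  induction b, h using Nat.le_induction with
  | base => simp
  | succ n hn ih => rw [Finset.sum_Ico_succ_top (by omega), ih]; abel

lemma tele_Ico_sub' {M : Type*} [AddCommGroup M] (f : ℕ → M) {a b : ℕ} (h : a ≤ b) :
    ∑ i ∈ Ico a b, (f (i + 1) - f i) = f b - f a := by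
  induction b, h using Nat.le_induction with
  | base => simp
  | succ n hn ih => rw [Finset.sum_Ico_succ_top (by omega), ih]; abel

/-- sign of `j' - j`. -/
def sg (j j' : ℕ) : ℚ := if j = j' then 0 else if j < j' then 1 else -1


lemma sg_lt {j j' : ℕ} (h : j < j') : sg j j' = 1 := by
  unfold sg; rw [if_neg (by omega), if_pos h]

lemma sg_gt {j j' : ℕ} (h : j' < j) : sg j j' = -1 := by
  unfold sg; rw [if_neg (by omega), if_neg (by omega)]

lemma sg_eq (j : ℕ) : sg j j = 0 := by unfold sg; rw [if_pos rfl]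

lemma hzero1 {B : (Fin r → ℚ) →ₗ[ℚ] (Fin r → ℚ) →ₗ[ℚ] ℚ} {f g : ℕ → Fin r → ℚ} {j : ℕ}
    (hconst : B (f (j+1)) (g (j+1)) = B (f j) (g j))
    (hcross : B (f j) (g (j+1)) = B (f (j+1)) (g j)) :
    B (f j - f (j+1)) (g j + g (j+1)) = 0 := by
  simp only [map_sub, map_add, LinearMap.sub_apply]
  linear_combination hcross - hconst

lemma Bsum_right {B : (Fin r → ℚ) →ₗ[ℚ] (Fin r → ℚ) →ₗ[ℚ] ℚ} (x : Fin r → ℚ)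
    (s : Finset ℕ) (g : ℕ → Fin r → ℚ) :
    ∑ j ∈ s, B x (g j) = B x (∑ j ∈ s, g j) := (map_sum (B x) g s).symm

lemma Bsum_left {B : (Fin r → ℚ) →ₗ[ℚ] (Fin r → ℚ) →ₗ[ℚ] ℚ} (y : Fin r → ℚ)
    (s : Finset ℕ) (f : ℕ → Fin r → ℚ) :
    ∑ j ∈ s, B (f j) y = B (∑ j ∈ s, f j) y := by
  have := (map_sum (B.flip y) f s).symm
  simpa [LinearMap.flip_apply] using this

lemma DBL1 (B : (Fin r → ℚ) →ₗ[ℚ] (Fin r → ℚ) →ₗ[ℚ] ℚ) (f g : ℕ → Fin r → ℚ)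
    {p q : ℕ} (hpq : p ≤ q)
    (hconst : ∀ ℓ, ℓ < p → B (f (ℓ+1)) (g (ℓ+1)) = B (f ℓ) (g ℓ))
    (hcross : ∀ ℓ, ℓ < p → B (f ℓ) (g (ℓ+1)) = B (f (ℓ+1)) (g ℓ)) :
    ∑ j ∈ range p, ∑ j' ∈ range q, sg j j' * B (f j - f (j+1)) (g j' - g (j'+1))
      = - B (f 0 - f p) (g 0 + g q) := by
  have hinner : ∀ j, j < p →
      ∑ j' ∈ range q, sg j j' * B (f j - f (j+1)) (g j' - g (j'+1))
        = - B (f j - f (j+1)) (g 0 + g q) := by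
    intro j hj
    have hjq : j < q := lt_of_lt_of_le hj hpq
    rw [← Finset.sum_range_add_sum_Ico _ (Nat.succ_le_of_lt hjq), Finset.sum_range_succ]
    have e1 : ∑ j' ∈ range j, sg j j' * B (f j - f (j+1)) (g j' - g (j'+1))
        = - B (f j - f (j+1)) (g 0 - g j) := by
      rw [← Finset.sum_range_sub' g j, ← Bsum_right, ← Finset.sum_neg_distrib]
      exact Finset.sum_congr rfl fun j' hj' => by
        rw [sg_gt (mem_range.mp hj')]; ring
    have e2 : ∑ j' ∈ Ico (j+1) q, sg j j' * B (f j - f (j+1)) (g j' - g (j'+1))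
        = B (f j - f (j+1)) (g (j+1) - g q) := by
      rw [← tele_Ico_sub g (Nat.succ_le_of_lt hjq), ← Bsum_right]
      exact Finset.sum_congr rfl fun j' hj' => by
        rw [sg_lt (by have := (mem_Ico.mp hj').1; omega)]; ring
    rw [e1, e2, sg_eq]
    have h0 := hzero1 (hconst j hj) (hcross j hj)
    simp only [map_sub, map_add, LinearMap.sub_apply] at h0 ⊢
    linear_combination h0
  rw [Finset.sum_congr rfl (fun j hj => hinner j (mem_range.mp hj)),
    Finset.sum_neg_distrib, Bsum_left, Finset.sum_range_sub' f p]

lemma DBL2 (B : (Fin r → ℚ) →ₗ[ℚ] (Fin r → ℚ) →ₗ[ℚ] ℚ) (f g : ℕ → Fin r → ℚ)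
    {p q n : ℕ} (hpq : p ≤ q) (hqn : q ≤ n)
    (hconst : ∀ ℓ, ℓ < n → B (f (ℓ+1)) (g (ℓ+1)) = B (f ℓ) (g ℓ))
    (hcross : ∀ ℓ, ℓ < n → B (f ℓ) (g (ℓ+1)) = B (f (ℓ+1)) (g ℓ)) :
    ∑ j ∈ Ico p n, ∑ j' ∈ Ico q n, sg j j' * B (f (j+1) - f j) (g (j'+1) - g j')
      = B (f q - f p) (g n - g q) + B (f n - f q) (g n + g q) := by
  have hinner1 : ∀ j, j < q →
      ∑ j' ∈ Ico q n, sg j j' * B (f (j+1) - f j) (g (j'+1) - g j')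
        = B (f (j+1) - f j) (g n - g q) := by
    intro j hj
    rw [← tele_Ico_sub' g hqn, ← Bsum_right]
    exact Finset.sum_congr rfl fun j' hj' => by
      rw [sg_lt (by have := (mem_Ico.mp hj').1; omega)]; ring
  have hinner2 : ∀ j, q ≤ j → j < n →
      ∑ j' ∈ Ico q n, sg j j' * B (f (j+1) - f j) (g (j'+1) - g j')
        = B (f (j+1) - f j) (g n + g q) := by
    intro j hj hjn
    rw [← Finset.sum_Ico_consecutive _ (by omega : q ≤ j + 1) (by omega : j + 1 ≤ n),
      Finset.sum_Ico_succ_top hj]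
    have e1 : ∑ j' ∈ Ico q j, sg j j' * B (f (j+1) - f j) (g (j'+1) - g j')
        = - B (f (j+1) - f j) (g j - g q) := by
      rw [← tele_Ico_sub' g hj, ← Bsum_right, ← Finset.sum_neg_distrib]
      exact Finset.sum_congr rfl fun j' hj' => by
        rw [sg_gt (mem_Ico.mp hj').2]; ring
    have e2 : ∑ j' ∈ Ico (j+1) n, sg j j' * B (f (j+1) - f j) (g (j'+1) - g j')
        = B (f (j+1) - f j) (g n - g (j+1)) := by
      rw [← tele_Ico_sub' g (by omega : j + 1 ≤ n), ← Bsum_right]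
      exact Finset.sum_congr rfl fun j' hj' => by
        rw [sg_lt (by have := (mem_Ico.mp hj').1; omega)]; ring
    rw [e1, e2, sg_eq]
    have h0 : B (f (j+1) - f j) (g j + g (j+1)) = 0 := by
      simp only [map_sub, map_add, LinearMap.sub_apply]
      linear_combination (hconst j hjn) - (hcross j hjn)
    simp only [map_sub, map_add, LinearMap.sub_apply] at h0 ⊢
    linear_combination -h0
  rw [← Finset.sum_Ico_consecutive _ hpq hqn]
  have h1 : ∑ j ∈ Ico p q, ∑ j' ∈ Ico q n, sg j j' * B (f (j+1) - f j) (g (j'+1) - g j')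
      = B (f q - f p) (g n - g q) := by
    rw [Finset.sum_congr rfl (fun j hj => hinner1 j (mem_Ico.mp hj).2),
      Bsum_left, tele_Ico_sub' f hpq]
  have h2 : ∑ j ∈ Ico q n, ∑ j' ∈ Ico q n, sg j j' * B (f (j+1) - f j) (g (j'+1) - g j')
      = B (f n - f q) (g n + g q) := by
    rw [Finset.sum_congr rfl (fun j hj => hinner2 j (mem_Ico.mp hj).1 (mem_Ico.mp hj).2),
      Bsum_left, tele_Ico_sub' f hqn]
  rw [h1, h2]


end Stmt17Aux

open Stmt17Aux in
/-- The four-region sign/weight function for the double sum. -/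
def Umap (r : ℕ) (B : (Fin r → ℚ) →ₗ[ℚ] (Fin r → ℚ) →ₗ[ℚ] ℚ)
    (G G' D D' : ℕ → Fin r → ℚ) (p q : ℕ) (j j' : ℕ) : ℚ :=
  if j < p ∧ j' < q then -(sg j j') * B (G j - G (j+1)) (G' j' - G' (j'+1))
  else if ¬ j < p ∧ ¬ j' < q then sg j j' * B (D (j+1) - D j) (D' (j'+1) - D' j')
  else 0

namespace Stmt17Aux

lemma Umap_bb {r : ℕ} {B : (Fin r → ℚ) →ₗ[ℚ] (Fin r → ℚ) →ₗ[ℚ] ℚ}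
    {G G' D D' : ℕ → Fin r → ℚ} {p q j j' : ℕ} (h1 : j < p) (h2 : j' < q) :
    Umap r B G G' D D' p q j j'
      = -(sg j j') * B (G j - G (j+1)) (G' j' - G' (j'+1)) := by
  rw [Umap, if_pos ⟨h1, h2⟩]

lemma Umap_uu {r : ℕ} {B : (Fin r → ℚ) →ₗ[ℚ] (Fin r → ℚ) →ₗ[ℚ] ℚ}
    {G G' D D' : ℕ → Fin r → ℚ} {p q j j' : ℕ} (h1 : ¬ j < p) (h2 : ¬ j' < q) :
    Umap r B G G' D D' p q j j'
      = sg j j' * B (D (j+1) - D j) (D' (j'+1) - D' j') := by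
  rw [Umap, if_neg (by tauto), if_pos ⟨h1, h2⟩]

lemma Umap_mix {r : ℕ} {B : (Fin r → ℚ) →ₗ[ℚ] (Fin r → ℚ) →ₗ[ℚ] ℚ}
    {G G' D D' : ℕ → Fin r → ℚ} {p q j j' : ℕ}
    (h : (j < p ∧ ¬ j' < q) ∨ (¬ j < p ∧ j' < q)) :
    Umap r B G G' D D' p q j j' = 0 := by
  rw [Umap, if_neg (by tauto), if_neg (by tauto)]

end Stmt17Aux


open Finset Stmt17Aux in
/-- The combinatorial heart of Theorem 2 of the paper: for a double word `w` (a letter is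
a pair `(index, barred?)`; positions are 0-based), with `γ^k = u_{≥k} ω_{|i_k|}`,
`δ^k = v_{<k} ω_{|i_k|}`, `γ^k_ℓ = u_{≥ℓ}⁻¹ γ^k`, `δ^k_ℓ = v_{<ℓ}⁻¹ δ^k`, exponents
`c^k_ℓ α_{|i_ℓ|} = γ^k_ℓ - γ^k_{ℓ+1}` and `d^k_ℓ α_{|i_ℓ|} = δ^k_{ℓ+1} - δ^k_ℓ`, and the
skew pairing `C ℓ ℓ' = ε(i_ℓ)(α_{|i_ℓ|}, α_{|i_{ℓ'}|})` for `ℓ < ℓ'` with `ε(i_ℓ) =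
ε(i_{ℓ'})`, `C ℓ ℓ' = 0` when the signs differ, the bilinear extension of the pairing to
the monomials `M_k = a^{-ω_{|i_k|}} ∏_{ℓ<k} y_ℓ^{c^k_ℓ} ∏_{ℓ≥k} y_ℓ^{d^k_ℓ}`
(with `⟨y_ℓ, a^γ⟩ = (α_{|i_ℓ|}, γ)` and `⟨a^γ, a^{γ'}⟩ = 0`) satisfies
`⟨M_k, M_{k'}⟩ = (γ^k, γ^{k'}) - (δ^k, δ^{k'})` for `k < k'`. -/
theorem stmt17 (r : ℕ) (A : Fin r → Fin r → ℤ) (dsym : Fin r → ℚ)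
    (hGCM_diag : ∀ i, A i i = 2)
    (hGCM_off : ∀ i j, i ≠ j → A i j ≤ 0)
    (hd_pos : ∀ i, 0 < dsym i)
    (hsymm : ∀ i j, dsym i * A i j = dsym j * A j i)
    (B : (Fin r → ℚ) →ₗ[ℚ] (Fin r → ℚ) →ₗ[ℚ] ℚ)
    (hB_symm : ∀ γ δ, B γ δ = B δ γ)
    (hB_root : ∀ i γ, B (simpleRoot r A i) γ = dsym i * γ i)
    (w : List (Fin r × Bool))
    (γ δ : Fin w.length → Fin r → ℚ)
    (γl δl : Fin w.length → ℕ → Fin r → ℚ)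
    (c e : Fin w.length → Fin w.length → ℚ)
    (C : Fin w.length → Fin w.length → ℚ)
    (ε : Fin w.length → ℚ)
    (hε : ∀ ℓ, ε ℓ = if (w.get ℓ).2 then -1 else 1)
    (hγ : ∀ k, γ k =
      chainRefl r A (((w.drop ↑k).filter (fun t => t.2)).map Prod.fst) (fund r (w.get k).1))
    (hδ : ∀ k, δ k =
      chainRefl r A ((((w.take ↑k).filter (fun t => !t.2)).map Prod.fst).reverse)
        (fund r (w.get k).1))
    (hγl : ∀ k (ℓ : ℕ), γl k ℓ =
      chainRefl r A ((((w.drop ℓ).filter (fun t => t.2)).map Prod.fst).reverse) (γ k))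
    (hδl : ∀ k (ℓ : ℕ), δl k ℓ =
      chainRefl r A (((w.take ℓ).filter (fun t => !t.2)).map Prod.fst) (δ k))
    (hc : ∀ k ℓ, c k ℓ • simpleRoot r A (w.get ℓ).1 = γl k ↑ℓ - γl k (↑ℓ + 1))
    (he : ∀ k ℓ, e k ℓ • simpleRoot r A (w.get ℓ).1 = δl k (↑ℓ + 1) - δl k ↑ℓ)
    (hC1 : ∀ ℓ ℓ', ℓ < ℓ' → (w.get ℓ).2 = (w.get ℓ').2 →
      C ℓ ℓ' = ε ℓ * B (simpleRoot r A (w.get ℓ).1) (simpleRoot r A (w.get ℓ').1))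
    (hC2 : ∀ ℓ ℓ', (w.get ℓ).2 ≠ (w.get ℓ').2 → C ℓ ℓ' = 0)
    (hC3 : ∀ ℓ ℓ', C ℓ' ℓ = - C ℓ ℓ')
    (k k' : Fin w.length) (hkk' : k < k') :
    (∑ ℓ' : Fin w.length, (if (ℓ' : ℕ) < ↑k' then c k' ℓ' else e k' ℓ') *
        B (fund r (w.get k).1) (simpleRoot r A (w.get ℓ').1))
      - (∑ ℓ : Fin w.length, (if (ℓ : ℕ) < ↑k then c k ℓ else e k ℓ) *
        B (simpleRoot r A (w.get ℓ).1) (fund r (w.get k').1))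
      + (∑ ℓ : Fin w.length, ∑ ℓ' : Fin w.length,
        (if (ℓ : ℕ) < ↑k then c k ℓ else e k ℓ) *
          (if (ℓ' : ℕ) < ↑k' then c k' ℓ' else e k' ℓ') * C ℓ ℓ')
    = B (γ k) (γ k') - B (δ k) (δ k') := by
  classical
  have hkk : (k : ℕ) < (k' : ℕ) := hkk'
  -- step lemmas
  have hγstep : ∀ (k₀ : Fin w.length) (j : ℕ) (h : j < w.length),
      γl k₀ j = if (w.get ⟨j, h⟩).2 = true
        then simpleRefl r A (w.get ⟨j, h⟩).1 (γl k₀ (j+1)) else γl k₀ (j+1) := by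
    intro k₀ j h
    rw [hγl k₀ j, hγl k₀ (j+1), List.drop_eq_getElem_cons h]
    have hg : w[j] = w.get ⟨j, h⟩ := by simp [List.get_eq_getElem]
    by_cases hb : (w.get ⟨j, h⟩).2 = true
    · rw [if_pos hb, List.filter_cons_of_pos (by rw [hg]; exact hb), List.map_cons,
        List.reverse_cons, chainRefl_concat, hg]
    · rw [if_neg hb, List.filter_cons_of_neg (by rw [hg]; simpa using hb)]
  have hδstep : ∀ (k₀ : Fin w.length) (j : ℕ) (h : j < w.length),
      δl k₀ (j+1) = if (w.get ⟨j, h⟩).2 = false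
        then simpleRefl r A (w.get ⟨j, h⟩).1 (δl k₀ j) else δl k₀ j := by
    intro k₀ j h
    rw [hδl k₀ (j+1), hδl k₀ j]
    have hg : w[j] = w.get ⟨j, h⟩ := by simp [List.get_eq_getElem]
    have ht : w.take (j+1) = w.take j ++ [w.get ⟨j, h⟩] := by
      rw [List.take_succ, List.getElem?_eq_getElem h]
      rfl
    rw [ht, List.filter_append]
    by_cases hb : (w.get ⟨j, h⟩).2 = false
    · rw [if_pos hb]
      have hf : List.filter (fun t => !t.2) [w.get ⟨j, h⟩] = [w.get ⟨j, h⟩] := by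
        have hb2 : (w[j]).2 = false := hb
        simp [List.filter_singleton, hb2]
      rw [hf, List.map_append, List.map_cons, List.map_nil, chainRefl_concat]
    · rw [if_neg hb]
      have hf : List.filter (fun t => !t.2) [w.get ⟨j, h⟩] = [] := by
        have hb' : (w[j]).2 = true := by
          cases hx : (w.get ⟨j, h⟩).2
          · exact absurd hx hb
          · rfl
        simp [List.filter_singleton, hb']
      rw [hf, List.append_nil]
  have hγfix : ∀ k₀ : Fin w.length, γl k₀ ↑k₀ = fund r (w.get k₀).1 := by
    intro k₀; rw [hγl, hγ]; exact chainRefl_reverse_cancel hGCM_diag _ _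
  have hδfix : ∀ k₀ : Fin w.length, δl k₀ ↑k₀ = fund r (w.get k₀).1 := by
    intro k₀; rw [hδl, hδ]; exact chainRefl_cancel_reverse hGCM_diag _ _
  have hγtop : ∀ k₀ : Fin w.length, γl k₀ w.length = γ k₀ := by
    intro k₀; rw [hγl, List.drop_length]; rfl
  have hδbot : ∀ k₀ : Fin w.length, δl k₀ 0 = δ k₀ := by
    intro k₀; rw [hδl]; rfl
  have hγconst : ∀ j : ℕ, B (γl k j) (γl k' j) = B (γ k) (γ k') := by
    intro j; rw [hγl, hγl]; exact B_chain_inv hGCM_diag hB_symm hB_root _ _ _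
  have hδconst : ∀ j : ℕ, B (δl k j) (δl k' j) = B (δ k) (δ k') := by
    intro j; rw [hδl, hδl]; exact B_chain_inv hGCM_diag hB_symm hB_root _ _ _
  have hγcross : ∀ j : ℕ, j < w.length →
      B (γl k j) (γl k' (j+1)) = B (γl k (j+1)) (γl k' j) := by
    intro j h
    rw [hγstep k j h, hγstep k' j h]
    by_cases hb : (w.get ⟨j, h⟩).2 = true
    · rw [if_pos hb, if_pos hb, B_cross hB_symm hB_root]
    · rw [if_neg hb, if_neg hb]
  have hδcross : ∀ j : ℕ, j < w.length →
      B (δl k j) (δl k' (j+1)) = B (δl k (j+1)) (δl k' j) := by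
    intro j h
    rw [hδstep k j h, hδstep k' j h]
    by_cases hb : (w.get ⟨j, h⟩).2 = false
    · rw [if_pos hb, if_pos hb, ← B_cross hB_symm hB_root]
    · rw [if_neg hb, if_neg hb]
  have hα2 : ∀ i : Fin r, simpleRoot r A i i = 2 := fun i => by
    simp [simpleRoot, hGCM_diag i]
  have czero : ∀ (k₀ ℓ₀ : Fin w.length), (w.get ℓ₀).2 = false → c k₀ ℓ₀ = 0 := by
    intro k₀ ℓ₀ hb
    have h1 := hc k₀ ℓ₀
    have h2 : γl k₀ ↑ℓ₀ = γl k₀ (↑ℓ₀ + 1) := by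
      have h3 := hγstep k₀ ↑ℓ₀ ℓ₀.2
      simp only [Fin.eta] at h3
      rwa [if_neg (by rw [hb]; simp)] at h3
    rw [h2, sub_self] at h1
    have h3 := congrFun h1 (w.get ℓ₀).1
    simp only [Pi.smul_apply, smul_eq_mul, Pi.zero_apply, hα2] at h3
    linarith
  have ezero : ∀ (k₀ ℓ₀ : Fin w.length), (w.get ℓ₀).2 = true → e k₀ ℓ₀ = 0 := by
    intro k₀ ℓ₀ hb
    have h1 := he k₀ ℓ₀
    have h2 : δl k₀ (↑ℓ₀ + 1) = δl k₀ ↑ℓ₀ := by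
      have h3 := hδstep k₀ ↑ℓ₀ ℓ₀.2
      simp only [Fin.eta] at h3
      rwa [if_neg (by rw [hb]; simp)] at h3
    rw [h2, sub_self] at h1
    have h3 := congrFun h1 (w.get ℓ₀).1
    simp only [Pi.smul_apply, smul_eq_mul, Pi.zero_apply, hα2] at h3
    linarith
  have Cbb : ∀ ℓ ℓ' : Fin w.length, (w.get ℓ).2 = true → (w.get ℓ').2 = true →
      C ℓ ℓ' = -(sg ↑ℓ ↑ℓ') *
        B (simpleRoot r A (w.get ℓ).1) (simpleRoot r A (w.get ℓ').1) := by
    intro ℓ ℓ' hb hb'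
    rcases lt_trichotomy (↑ℓ : ℕ) ↑ℓ' with h | h | h
    · rw [hC1 ℓ ℓ' (Fin.lt_def.mpr h) (by rw [hb, hb']), hε ℓ, hb, sg_lt h]
      norm_num
    · have hh : ℓ = ℓ' := Fin.ext h
      subst hh
      have h0 : C ℓ ℓ = 0 := by have := hC3 ℓ ℓ; linarith
      rw [h0, sg_eq]; ring
    · rw [hC3 ℓ' ℓ, hC1 ℓ' ℓ (Fin.lt_def.mpr h) (by rw [hb, hb']), hε ℓ', hb', sg_gt h,
        hB_symm (simpleRoot r A (w.get ℓ').1) (simpleRoot r A (w.get ℓ).1)]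
      norm_num
  have Cuu : ∀ ℓ ℓ' : Fin w.length, (w.get ℓ).2 = false → (w.get ℓ').2 = false →
      C ℓ ℓ' = (sg ↑ℓ ↑ℓ') *
        B (simpleRoot r A (w.get ℓ).1) (simpleRoot r A (w.get ℓ').1) := by
    intro ℓ ℓ' hb hb'
    rcases lt_trichotomy (↑ℓ : ℕ) ↑ℓ' with h | h | h
    · rw [hC1 ℓ ℓ' (Fin.lt_def.mpr h) (by rw [hb, hb']), hε ℓ, hb, sg_lt h]
      norm_num
    · have hh : ℓ = ℓ' := Fin.ext h
      subst hh
      have h0 : C ℓ ℓ = 0 := by have := hC3 ℓ ℓ; linarith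
      rw [h0, sg_eq]; ring
    · rw [hC3 ℓ' ℓ, hC1 ℓ' ℓ (Fin.lt_def.mpr h) (by rw [hb, hb']), hε ℓ', hb', sg_gt h,
        hB_symm (simpleRoot r A (w.get ℓ').1) (simpleRoot r A (w.get ℓ).1)]
      norm_num
  -- the pointwise identity for the double sum
  have claim : ∀ ℓ ℓ' : Fin w.length,
      (if (ℓ : ℕ) < ↑k then c k ℓ else e k ℓ) *
          (if (ℓ' : ℕ) < ↑k' then c k' ℓ' else e k' ℓ') * C ℓ ℓ'
        = Umap r B (γl k) (γl k') (δl k) (δl k') ↑k ↑k' ↑ℓ ↑ℓ' := by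
    intro ℓ ℓ'
    by_cases h1 : (ℓ : ℕ) < ↑k <;> by_cases h2 : (ℓ' : ℕ) < ↑k'
    · rw [if_pos h1, if_pos h2, Umap_bb h1 h2, ← hc k ℓ, ← hc k' ℓ']
      simp only [map_smul, LinearMap.smul_apply, smul_eq_mul]
      cases hb : (w.get ℓ).2
      · rw [czero k ℓ hb]; ring
      · cases hb' : (w.get ℓ').2
        · rw [czero k' ℓ' hb']; ring
        · rw [Cbb ℓ ℓ' hb hb']; ring
    · rw [if_pos h1, if_neg h2, Umap_mix (Or.inl ⟨h1, h2⟩)]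
      cases hb : (w.get ℓ).2
      · rw [czero k ℓ hb]; ring
      · cases hb' : (w.get ℓ').2
        · rw [hC2 ℓ ℓ' (by rw [hb, hb']; simp)]; ring
        · rw [ezero k' ℓ' hb']; ring
    · rw [if_neg h1, if_pos h2, Umap_mix (Or.inr ⟨h1, h2⟩)]
      cases hb : (w.get ℓ).2
      · cases hb' : (w.get ℓ').2
        · rw [czero k' ℓ' hb']; ring
        · rw [hC2 ℓ ℓ' (by rw [hb, hb']; simp)]; ring
      · rw [ezero k ℓ hb]; ring
    · rw [if_neg h1, if_neg h2, Umap_uu h1 h2, ← he k ℓ, ← he k' ℓ']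
      simp only [map_smul, LinearMap.smul_apply, smul_eq_mul]
      cases hb : (w.get ℓ).2
      · cases hb' : (w.get ℓ').2
        · rw [Cuu ℓ ℓ' hb hb']; ring
        · rw [ezero k' ℓ' hb']; ring
      · rw [ezero k ℓ hb]; ring
  -- the three sums
  have hS1 : (∑ ℓ' : Fin w.length, (if (ℓ' : ℕ) < ↑k' then c k' ℓ' else e k' ℓ') *
        B (fund r (w.get k).1) (simpleRoot r A (w.get ℓ').1))
      = B (fund r (w.get k).1) (γl k' 0) + B (fund r (w.get k).1) (δl k' w.length)
        - 2 * B (fund r (w.get k).1) (fund r (w.get k').1) := by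
    have step1 : ∀ ℓ' : Fin w.length, (if (ℓ' : ℕ) < ↑k' then c k' ℓ' else e k' ℓ') *
        B (fund r (w.get k).1) (simpleRoot r A (w.get ℓ').1)
        = B (fund r (w.get k).1) (if (ℓ' : ℕ) < ↑k' then γl k' ↑ℓ' - γl k' (↑ℓ' + 1)
            else δl k' (↑ℓ' + 1) - δl k' ↑ℓ') := by
      intro ℓ'
      by_cases h : (ℓ' : ℕ) < ↑k'
      · rw [if_pos h, if_pos h, ← hc k' ℓ', map_smul, smul_eq_mul]
      · rw [if_neg h, if_neg h, ← he k' ℓ', map_smul, smul_eq_mul]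
    rw [Finset.sum_congr rfl (fun ℓ' _ => step1 ℓ'),
      Fin.sum_univ_eq_sum_range (fun j => B (fund r (w.get k).1)
        (if j < (↑k' : ℕ) then γl k' j - γl k' (j + 1) else δl k' (j + 1) - δl k' j))
        w.length,
      Bsum_right]
    have hsplit : (∑ j ∈ range w.length,
        (if j < (↑k' : ℕ) then γl k' j - γl k' (j + 1) else δl k' (j + 1) - δl k' j))
        = (γl k' 0 - fund r (w.get k').1) + (δl k' w.length - fund r (w.get k').1) := by
      rw [← Finset.sum_range_add_sum_Ico _ (le_of_lt k'.2)]
      have e1 : (∑ j ∈ range (↑k' : ℕ),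
          (if j < (↑k' : ℕ) then γl k' j - γl k' (j + 1) else δl k' (j + 1) - δl k' j))
          = γl k' 0 - γl k' ↑k' := by
        rw [Finset.sum_congr rfl (fun j hj => if_pos (mem_range.mp hj)),
          Finset.sum_range_sub']
      have e2 : (∑ j ∈ Ico (↑k' : ℕ) w.length,
          (if j < (↑k' : ℕ) then γl k' j - γl k' (j + 1) else δl k' (j + 1) - δl k' j))
          = δl k' w.length - δl k' ↑k' := by
        rw [Finset.sum_congr rfl
          (fun j hj => if_neg (by have := (mem_Ico.mp hj).1; omega)),
          tele_Ico_sub' _ (le_of_lt k'.2)]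
      rw [e1, e2, hγfix k', hδfix k']
    rw [hsplit]
    simp only [map_sub, map_add]
    ring
  have hS2 : (∑ ℓ : Fin w.length, (if (ℓ : ℕ) < ↑k then c k ℓ else e k ℓ) *
        B (simpleRoot r A (w.get ℓ).1) (fund r (w.get k').1))
      = B (γl k 0) (fund r (w.get k').1) + B (δl k w.length) (fund r (w.get k').1)
        - 2 * B (fund r (w.get k).1) (fund r (w.get k').1) := by
    have step1 : ∀ ℓ : Fin w.length, (if (ℓ : ℕ) < ↑k then c k ℓ else e k ℓ) *
        B (simpleRoot r A (w.get ℓ).1) (fund r (w.get k').1)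
        = B (if (ℓ : ℕ) < ↑k then γl k ↑ℓ - γl k (↑ℓ + 1)
            else δl k (↑ℓ + 1) - δl k ↑ℓ) (fund r (w.get k').1) := by
      intro ℓ
      by_cases h : (ℓ : ℕ) < ↑k
      · rw [if_pos h, if_pos h, ← hc k ℓ, map_smul, LinearMap.smul_apply, smul_eq_mul]
      · rw [if_neg h, if_neg h, ← he k ℓ, map_smul, LinearMap.smul_apply, smul_eq_mul]
    rw [Finset.sum_congr rfl (fun ℓ _ => step1 ℓ),
      Fin.sum_univ_eq_sum_range (fun j => B
        (if j < (↑k : ℕ) then γl k j - γl k (j + 1) else δl k (j + 1) - δl k j)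
        (fund r (w.get k').1)) w.length,
      Bsum_left]
    have hsplit : (∑ j ∈ range w.length,
        (if j < (↑k : ℕ) then γl k j - γl k (j + 1) else δl k (j + 1) - δl k j))
        = (γl k 0 - fund r (w.get k).1) + (δl k w.length - fund r (w.get k).1) := by
      rw [← Finset.sum_range_add_sum_Ico _ (le_of_lt k.2)]
      have e1 : (∑ j ∈ range (↑k : ℕ),
          (if j < (↑k : ℕ) then γl k j - γl k (j + 1) else δl k (j + 1) - δl k j))
          = γl k 0 - γl k ↑k := by
        rw [Finset.sum_congr rfl (fun j hj => if_pos (mem_range.mp hj)),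
          Finset.sum_range_sub']
      have e2 : (∑ j ∈ Ico (↑k : ℕ) w.length,
          (if j < (↑k : ℕ) then γl k j - γl k (j + 1) else δl k (j + 1) - δl k j))
          = δl k w.length - δl k ↑k := by
        rw [Finset.sum_congr rfl
          (fun j hj => if_neg (by have := (mem_Ico.mp hj).1; omega)),
          tele_Ico_sub' _ (le_of_lt k.2)]
      rw [e1, e2, hγfix k, hδfix k]
    rw [hsplit]
    simp only [map_sub, map_add, LinearMap.sub_apply, LinearMap.add_apply]
    ring
  have hS3 : (∑ ℓ : Fin w.length, ∑ ℓ' : Fin w.length,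
        (if (ℓ : ℕ) < ↑k then c k ℓ else e k ℓ) *
          (if (ℓ' : ℕ) < ↑k' then c k' ℓ' else e k' ℓ') * C ℓ ℓ')
      = B (γl k 0 - fund r (w.get k).1) (γl k' 0 + fund r (w.get k').1)
        + (B (δl k ↑k' - fund r (w.get k).1) (δl k' w.length - fund r (w.get k').1)
          + B (δl k w.length - δl k ↑k') (δl k' w.length + fund r (w.get k').1)) := by
    have hconv : (∑ ℓ : Fin w.length, ∑ ℓ' : Fin w.length,
        (if (ℓ : ℕ) < ↑k then c k ℓ else e k ℓ) *
          (if (ℓ' : ℕ) < ↑k' then c k' ℓ' else e k' ℓ') * C ℓ ℓ')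
        = ∑ j ∈ range w.length, ∑ j' ∈ range w.length,
            Umap r B (γl k) (γl k') (δl k) (δl k') ↑k ↑k' j j' := by
      rw [← Fin.sum_univ_eq_sum_range (fun j => ∑ j' ∈ range w.length,
        Umap r B (γl k) (γl k') (δl k) (δl k') ↑k ↑k' j j') w.length]
      refine Finset.sum_congr rfl fun ℓ _ => ?_
      rw [← Fin.sum_univ_eq_sum_range (fun j' =>
        Umap r B (γl k) (γl k') (δl k) (δl k') ↑k ↑k' ↑ℓ j') w.length]
      exact Finset.sum_congr rfl fun ℓ' _ => claim ℓ ℓ'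
    rw [hconv, ← Finset.sum_range_add_sum_Ico _ (le_of_lt k.2)]
    have hA : (∑ j ∈ range (↑k : ℕ), ∑ j' ∈ range w.length,
        Umap r B (γl k) (γl k') (δl k) (δl k') ↑k ↑k' j j')
        = B (γl k 0 - fund r (w.get k).1) (γl k' 0 + fund r (w.get k').1) := by
      have hin : ∀ j, j < (↑k : ℕ) →
          (∑ j' ∈ range w.length, Umap r B (γl k) (γl k') (δl k) (δl k') ↑k ↑k' j j')
          = ∑ j' ∈ range (↑k' : ℕ), -(sg j j') *
              B (γl k j - γl k (j + 1)) (γl k' j' - γl k' (j' + 1)) := by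
        intro j hj
        rw [← Finset.sum_range_add_sum_Ico _ (le_of_lt k'.2)]
        have z : (∑ j' ∈ Ico (↑k' : ℕ) w.length,
            Umap r B (γl k) (γl k') (δl k) (δl k') ↑k ↑k' j j') = 0 :=
          Finset.sum_eq_zero fun j' hj' =>
            Umap_mix (Or.inl ⟨hj, by have := (mem_Ico.mp hj').1; omega⟩)
        rw [z, add_zero]
        exact Finset.sum_congr rfl fun j' hj' => Umap_bb hj (mem_range.mp hj')
      rw [Finset.sum_congr rfl (fun j hj => hin j (mem_range.mp hj))]
      have hneg : (∑ j ∈ range (↑k : ℕ), ∑ j' ∈ range (↑k' : ℕ), -(sg j j') *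
            B (γl k j - γl k (j + 1)) (γl k' j' - γl k' (j' + 1)))
          = -(∑ j ∈ range (↑k : ℕ), ∑ j' ∈ range (↑k' : ℕ), sg j j' *
            B (γl k j - γl k (j + 1)) (γl k' j' - γl k' (j' + 1))) := by
        simp only [neg_mul, Finset.sum_neg_distrib]
      rw [hneg, DBL1 B (γl k) (γl k') (le_of_lt hkk)
        (fun ℓ _ => (hγconst (ℓ + 1)).trans (hγconst ℓ).symm)
        (fun ℓ hℓ => hγcross ℓ (lt_trans hℓ k.2)), neg_neg, hγfix k, hγfix k']
    have hB2 : (∑ j ∈ Ico (↑k : ℕ) w.length, ∑ j' ∈ range w.length,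
        Umap r B (γl k) (γl k') (δl k) (δl k') ↑k ↑k' j j')
        = B (δl k ↑k' - fund r (w.get k).1) (δl k' w.length - fund r (w.get k').1)
          + B (δl k w.length - δl k ↑k') (δl k' w.length + fund r (w.get k').1) := by
      have hin : ∀ j, (↑k : ℕ) ≤ j →
          (∑ j' ∈ range w.length, Umap r B (γl k) (γl k') (δl k) (δl k') ↑k ↑k' j j')
          = ∑ j' ∈ Ico (↑k' : ℕ) w.length, sg j j' *
              B (δl k (j + 1) - δl k j) (δl k' (j' + 1) - δl k' j') := by
        intro j hj
        rw [← Finset.sum_range_add_sum_Ico _ (le_of_lt k'.2)]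
        have z : (∑ j' ∈ range (↑k' : ℕ),
            Umap r B (γl k) (γl k') (δl k) (δl k') ↑k ↑k' j j') = 0 :=
          Finset.sum_eq_zero fun j' hj' =>
            Umap_mix (Or.inr ⟨by omega, mem_range.mp hj'⟩)
        rw [z, zero_add]
        exact Finset.sum_congr rfl fun j' hj' =>
          Umap_uu (by omega) (by have := (mem_Ico.mp hj').1; omega)
      rw [Finset.sum_congr rfl (fun j hj => hin j (mem_Ico.mp hj).1),
        DBL2 B (δl k) (δl k') (le_of_lt hkk) (le_of_lt k'.2)
          (fun ℓ _ => (hδconst (ℓ + 1)).trans (hδconst ℓ).symm)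
          (fun ℓ hℓ => hδcross ℓ hℓ), hδfix k, hδfix k']
    rw [hA, hB2]
  -- final assembly
  rw [hS1, hS2, hS3]
  have hP : B (γl k 0) (γl k' 0) = B (γ k) (γ k') := hγconst 0
  have hQ : B (δl k w.length) (δl k' w.length) = B (δ k) (δ k') := hδconst w.length
  have hQ2 : B (δl k ↑k') (fund r (w.get k').1) = B (δ k) (δ k') := by
    have h0 := hδconst (↑k' : ℕ)
    rwa [hδfix k'] at h0
  simp only [map_sub, map_add, LinearMap.sub_apply, LinearMap.add_apply]
  linear_combination hP + hQ - 2 * hQ2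
end

section
/- Consider the map φ: (C*)² × (C*)² → SL_2(C) sending ((p₁,q₁),(p₂,q₂)) to [[p₁,q₁],[0,p₁⁻¹]]·[[p₂,0],[q₂,p₂⁻¹]]. If the source carries the product Poisson structure with {q_k, p_k} = d·p_k·q_k (k = 1,2) and all other brackets of coordinates zero, then the pullbacks of the matrix entries x_{11}, x_{12}, x_{21}, x_{22} of the product satisfy the SL_2^{(d)} relations: {φ*x_{12}, φ*x_{11}} = d·φ*x_{11}·φ*x_{12}, {φ*x_{21}, φ*x_{11}} = d·φ*x_{11}·φ*x_{21}, {φ*x_{22}, φ*x_{11}} = 2d·φ*x_{12}·φ*x_{21}, {φ*x_{12}, φ*x_{21}} = 0, {φ*x_{22}, φ*x_{12}} = d·φ*x_{12}·φ*x_{22}, {φ*x_{22}, φ*x_{21}} = d·φ*x_{21}·φ*x_{22}. -/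
/-- The product of the two symplectic leaves `S₊ × S₋` of `SL₂^{(d)}`, with coordinates
`(p₁, q₁, p₂, q₂)` (all invertible, with inverses `u₁ = p₁⁻¹`, `u₂ = p₂⁻¹`) and the
product Poisson structure `{q_k, p_k} = d·p_k·q_k`, all other brackets of coordinates
zero, maps to `SL₂` by multiplying `[[p₁,q₁],[0,p₁⁻¹]]·[[p₂,0],[q₂,p₂⁻¹]]`.  The matrix
entries of the product, `x₁₁ = p₁p₂ + q₁q₂`, `x₁₂ = q₁p₂⁻¹`, `x₂₁ = p₁⁻¹q₂`,
`x₂₂ = p₁⁻¹p₂⁻¹`, satisfy the `SL₂^{(d)}` relations, i.e. the map is Poisson. -/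
theorem stmt19 {A : Type*} [CommRing A] [Algebra ℂ A] (d : ℂ)
    (B : A →ₗ[ℂ] A →ₗ[ℂ] A)
    (hskew : ∀ f g : A, B f g = - B g f)
    (hLeib : ∀ f g h : A, B (f * g) h = f * B g h + B f h * g)
    (p₁ q₁ p₂ q₂ u₁ u₂ : A)
    (hu₁ : u₁ * p₁ = 1) (hu₂ : u₂ * p₂ = 1)
    (h₁ : B q₁ p₁ = d • (p₁ * q₁)) (h₂ : B q₂ p₂ = d • (p₂ * q₂))
    (h₃ : B p₁ p₂ = 0) (h₄ : B p₁ q₂ = 0) (h₅ : B q₁ p₂ = 0) (h₆ : B q₁ q₂ = 0) :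
    B (q₁ * u₂) (p₁ * p₂ + q₁ * q₂) = d • ((p₁ * p₂ + q₁ * q₂) * (q₁ * u₂)) ∧
    B (u₁ * q₂) (p₁ * p₂ + q₁ * q₂) = d • ((p₁ * p₂ + q₁ * q₂) * (u₁ * q₂)) ∧
    B (u₁ * u₂) (p₁ * p₂ + q₁ * q₂) = (2 * d) • ((q₁ * u₂) * (u₁ * q₂)) ∧
    B (q₁ * u₂) (u₁ * q₂) = 0 ∧
    B (u₁ * u₂) (q₁ * u₂) = d • ((q₁ * u₂) * (u₁ * u₂)) ∧
    B (u₁ * u₂) (u₁ * q₂) = d • ((u₁ * q₂) * (u₁ * u₂)) := by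
  set c : A := algebraMap ℂ A d with hc
  simp only [Algebra.smul_def, ← hc] at h₁ h₂
  -- second-argument Leibniz rule
  have hLeib2 : ∀ f g h : A, B f (g * h) = g * B f h + B f g * h := by
    intro f g h
    rw [hskew f (g * h), hLeib g h f, hskew f h, hskew f g]; ring
  -- self brackets vanish
  have hself : ∀ f : A, B f f = 0 := by
    intro f
    have h2 : (2 : ℂ) • B f f = 0 := by
      rw [two_smul]
      have := hskew f f
      linear_combination this
    calc B f f = ((2 : ℂ)⁻¹ * 2) • B f f := by norm_num
    _ = (2 : ℂ)⁻¹ • ((2 : ℂ) • B f f) := by rw [mul_smul]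
    _ = 0 := by rw [h2, smul_zero]
  -- brackets with the inverses
  have hBu₁ : ∀ x : A, B u₁ x = -(u₁ * u₁ * B p₁ x) := by
    intro x
    have e : B (u₁ * p₁) x = u₁ * B p₁ x + B u₁ x * p₁ := hLeib u₁ p₁ x
    rw [hu₁] at e
    have e1 : B (1 : A) x = 0 := by
      have := hLeib 1 1 x
      rw [one_mul] at this
      linear_combination -this
    rw [e1] at e
    linear_combination (-u₁) * e + (-(B u₁ x)) * hu₁
  have hBu₂ : ∀ x : A, B u₂ x = -(u₂ * u₂ * B p₂ x) := by
    intro x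
    have e : B (u₂ * p₂) x = u₂ * B p₂ x + B u₂ x * p₂ := hLeib u₂ p₂ x
    rw [hu₂] at e
    have e1 : B (1 : A) x = 0 := by
      have := hLeib 1 1 x
      rw [one_mul] at this
      linear_combination -this
    rw [e1] at e
    linear_combination (-u₂) * e + (-(B u₂ x)) * hu₂
  -- all atomic brackets
  have h₃' : B p₂ p₁ = 0 := by rw [hskew, h₃, neg_zero]
  have h₄' : B q₂ p₁ = 0 := by rw [hskew, h₄, neg_zero]
  have h₅' : B p₂ q₁ = 0 := by rw [hskew, h₅, neg_zero]
  have h₆' : B q₂ q₁ = 0 := by rw [hskew, h₆, neg_zero]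
  have h₁' : B p₁ q₁ = -(c * (p₁ * q₁)) := by rw [hskew, h₁]
  have h₂' : B p₂ q₂ = -(c * (p₂ * q₂)) := by rw [hskew, h₂]
  have bu₁p₂ : B u₁ p₂ = 0 := by rw [hBu₁, h₃, mul_zero, neg_zero]
  have bu₁q₂ : B u₁ q₂ = 0 := by rw [hBu₁, h₄, mul_zero, neg_zero]
  have bu₂p₁ : B u₂ p₁ = 0 := by rw [hBu₂, h₃', mul_zero, neg_zero]
  have bu₂q₁ : B u₂ q₁ = 0 := by rw [hBu₂, h₅', mul_zero, neg_zero]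
  have bp₂u₁ : B p₂ u₁ = 0 := by rw [hskew, bu₁p₂, neg_zero]
  have bq₂u₁ : B q₂ u₁ = 0 := by rw [hskew, bu₁q₂, neg_zero]
  have bp₁u₂ : B p₁ u₂ = 0 := by rw [hskew, bu₂p₁, neg_zero]
  have bq₁u₂ : B q₁ u₂ = 0 := by rw [hskew, bu₂q₁, neg_zero]
  have bu₁u₂ : B u₁ u₂ = 0 := by rw [hBu₁, bp₁u₂, mul_zero, neg_zero]
  have bu₂u₁ : B u₂ u₁ = 0 := by rw [hskew, bu₁u₂, neg_zero]
  have bu₁p₁ : B u₁ p₁ = 0 := by rw [hBu₁, hself, mul_zero, neg_zero]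
  have bu₂p₂ : B u₂ p₂ = 0 := by rw [hBu₂, hself, mul_zero, neg_zero]
  have bp₁u₁ : B p₁ u₁ = 0 := by rw [hskew, bu₁p₁, neg_zero]
  have bp₂u₂ : B p₂ u₂ = 0 := by rw [hskew, bu₂p₂, neg_zero]
  have bu₁q₁ : B u₁ q₁ = c * (u₁ * q₁) := by
    rw [hBu₁, h₁']
    linear_combination (c * u₁ * q₁) * hu₁
  have bu₂q₂ : B u₂ q₂ = c * (u₂ * q₂) := by
    rw [hBu₂, h₂']
    linear_combination (c * u₂ * q₂) * hu₂
  have bq₁u₁ : B q₁ u₁ = -(c * (u₁ * q₁)) := by rw [hskew, bu₁q₁]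
  have bq₂u₂ : B q₂ u₂ = -(c * (u₂ * q₂)) := by rw [hskew, bu₂q₂]
  refine ⟨?_, ?_, ?_, ?_, ?_, ?_⟩ <;>
    simp only [map_add, hLeib, hLeib2, Algebra.smul_def, ← hc, map_mul, map_ofNat,
      h₁, h₂, h₃, h₄, h₅, h₆, h₁', h₂', h₃', h₄', h₅', h₆',
      bu₁p₂, bu₁q₂, bu₂p₁, bu₂q₁, bp₂u₁, bq₂u₁, bp₁u₂, bq₁u₂,
      bu₁u₂, bu₂u₁, bu₁p₁, bu₂p₂, bp₁u₁, bp₂u₂, bu₁q₁, bu₂q₂, bq₁u₁, bq₂u₂, hself] <;>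
    ring
end
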